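/- Let ℓ ∈ ℕ and, for integers n ≥ ℓ+1, set w(n) := (n+ℓ)!/(n−ℓ−1)!. Define difference operators on sequences u : ℤ → ℂ by (A₁u)(n) := (1/2)(ℓ+n+1)·u(n+1) + (1/2)(ℓ−n+1)·u(n−1) and (A₂u)(n) := (i/2)(ℓ+n+1)·u(n+1) − (i/2)(ℓ−n+1)·u(n−1). Then for all finitely supported f, v : ℤ → ℂ with f(n) = v(n) = 0 whenever n ≤ ℓ, and for each S ∈ {A₁, A₂}: Σ_{n≥ℓ+1} w(n)·conj((Sf)(n))·v(n) = −Σ_{n≥ℓ+1} w(n)·conj(f(n))·(Sv)(n). (These are the skew-symmetry relations showing that the holomorphic subrepresentation T_ℓ^+ in discrete Fourier space is unitary with respect to the inner product ⟨f|v⟩₊ = Σ_{n>ℓ} w(n)·conj(f(n))·v(n).) -/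

import Mathlib

noncomputable section

/-- The weight `w(n) = (n+ℓ)!/(n-ℓ-1)!` (for `n ≥ ℓ+1`), as a complex number. -/
def wWeight (ℓ : ℕ) (n : ℤ) : ℂ :=
  (Nat.factorial (n + ℓ).toNat : ℂ) / (Nat.factorial (n - ℓ - 1).toNat : ℂ)

/-- The difference operator `A₁` in discrete Fourier space:
`(A₁u)(n) = ½(ℓ+n+1)u(n+1) + ½(ℓ-n+1)u(n-1)`. -/
def A1disc (ℓ : ℕ) (u : ℤ → ℂ) : ℤ → ℂ :=
  fun n => (1 / 2 : ℂ) * ((ℓ : ℂ) + n + 1) * u (n + 1) +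
    (1 / 2 : ℂ) * ((ℓ : ℂ) - n + 1) * u (n - 1)

/-- The difference operator `A₂` in discrete Fourier space:
`(A₂u)(n) = (i/2)(ℓ+n+1)u(n+1) - (i/2)(ℓ-n+1)u(n-1)`. -/
def A2disc (ℓ : ℕ) (u : ℤ → ℂ) : ℤ → ℂ :=
  fun n => (Complex.I / 2) * ((ℓ : ℂ) + n + 1) * u (n + 1) -
    (Complex.I / 2) * ((ℓ : ℂ) - n + 1) * u (n - 1)

open Complex Function

lemma wfac1 (ℓ : ℕ) (n : ℤ) (hn : (ℓ:ℤ) + 1 ≤ n) :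
    wWeight ℓ n * ((ℓ:ℂ) + n + 1) = wWeight ℓ (n+1) * ((n:ℂ) - ℓ) := by
  set A := (n + ℓ).toNat with hA
  set B := (n - ℓ - 1).toNat with hB
  have h1 : (n + 1 + ℓ).toNat = A + 1 := by omega
  have h2 : (n + 1 - ℓ - 1).toNat = B + 1 := by omega
  have hAc : (A:ℂ) = (n:ℂ) + ℓ := by
    have : (A:ℤ) = n + ℓ := by omega
    exact_mod_cast congrArg (Int.cast : ℤ → ℂ) this
  have hBc : (B:ℂ) = (n:ℂ) - ℓ - 1 := by
    have : (B:ℤ) = n - ℓ - 1 := by omega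
    exact_mod_cast congrArg (Int.cast : ℤ → ℂ) this
  have hBne : ((Nat.factorial B : ℂ)) ≠ 0 :=
    Nat.cast_ne_zero.mpr (Nat.factorial_ne_zero B)
  have hB1 : ((B:ℂ) + 1) ≠ 0 := by
    have : (((B+1 : ℕ)):ℂ) ≠ 0 := Nat.cast_ne_zero.mpr (Nat.succ_ne_zero B)
    simpa using this
  have e1 : wWeight ℓ n = (Nat.factorial A : ℂ) / (Nat.factorial B : ℂ) := rfl
  have e2 : wWeight ℓ (n+1) = (Nat.factorial (A+1) : ℂ) / (Nat.factorial (B+1) : ℂ) := by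
    simp only [wWeight, h1, h2]
  rw [e1, e2, Nat.factorial_succ, Nat.factorial_succ,
    show (ℓ:ℂ) + n + 1 = (A:ℂ) + 1 from by rw [hAc]; ring,
    show (n:ℂ) - ℓ = (B:ℂ) + 1 from by rw [hBc]; ring]
  push_cast
  field_simp

lemma wfac2 (ℓ : ℕ) (n : ℤ) (hn : (ℓ:ℤ) + 2 ≤ n) :
    wWeight ℓ n * ((n:ℂ) - ℓ - 1) = wWeight ℓ (n-1) * ((n:ℂ) + ℓ) := by
  have h := wfac1 ℓ (n-1) (by omega)
  rw [show n - 1 + 1 = n from by ring] at h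
  push_cast at h
  linear_combination -h

lemma sumA (ℓ : ℕ) (u x : ℤ → ℂ) (hx0 : ∀ n : ℤ, n ≤ (ℓ:ℤ) → x n = 0) :
    ∑' n : ℤ, wWeight ℓ n * ((ℓ:ℂ) + n + 1) * (starRingEnd ℂ) (u (n+1)) * x n
      = -∑' n : ℤ, wWeight ℓ n * ((ℓ:ℂ) - n + 1) * (starRingEnd ℂ) (u n) * x (n-1) := by
  set G : ℤ → ℂ := fun m => -(wWeight ℓ m * ((ℓ:ℂ) - m + 1) * (starRingEnd ℂ) (u m) * x (m-1))
    with hG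
  have step : ∀ n : ℤ,
      wWeight ℓ n * ((ℓ:ℂ) + n + 1) * (starRingEnd ℂ) (u (n+1)) * x n = G (n+1) := by
    intro n
    simp only [hG, add_sub_cancel_right]
    by_cases hn : (ℓ:ℤ) + 1 ≤ n
    · have hw := wfac1 ℓ n hn
      push_cast
      linear_combination ((starRingEnd ℂ) (u (n+1)) * x n) * hw
    · simp [hx0 n (by omega)]
  calc ∑' n : ℤ, wWeight ℓ n * ((ℓ:ℂ) + n + 1) * (starRingEnd ℂ) (u (n+1)) * x n
      = ∑' n : ℤ, G (n+1) := tsum_congr step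
    _ = ∑' m : ℤ, G m := (Equiv.addRight (1:ℤ)).tsum_eq G
    _ = -∑' n : ℤ, wWeight ℓ n * ((ℓ:ℂ) - n + 1) * (starRingEnd ℂ) (u n) * x (n-1) := by
        rw [hG, tsum_neg]

lemma sumB (ℓ : ℕ) (u x : ℤ → ℂ) (hu0 : ∀ n : ℤ, n ≤ (ℓ:ℤ) → u n = 0) :
    ∑' n : ℤ, wWeight ℓ n * ((ℓ:ℂ) - n + 1) * (starRingEnd ℂ) (u (n-1)) * x n
      = -∑' n : ℤ, wWeight ℓ n * ((ℓ:ℂ) + n + 1) * (starRingEnd ℂ) (u n) * x (n+1) := by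
  set G : ℤ → ℂ := fun m => -(wWeight ℓ m * ((ℓ:ℂ) + m + 1) * (starRingEnd ℂ) (u m) * x (m+1))
    with hG
  have step : ∀ n : ℤ,
      wWeight ℓ n * ((ℓ:ℂ) - n + 1) * (starRingEnd ℂ) (u (n-1)) * x n = G (n-1) := by
    intro n
    simp only [hG, sub_add_cancel]
    by_cases hn : (ℓ:ℤ) + 2 ≤ n
    · have hw := wfac2 ℓ n hn
      push_cast
      linear_combination (-((starRingEnd ℂ) (u (n-1)) * x n)) * hw
    · simp [hu0 (n-1) (by omega)]
  calc ∑' n : ℤ, wWeight ℓ n * ((ℓ:ℂ) - n + 1) * (starRingEnd ℂ) (u (n-1)) * x n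
      = ∑' n : ℤ, G (n-1) := tsum_congr step
    _ = ∑' m : ℤ, G m := (Equiv.subRight (1:ℤ)).tsum_eq G
    _ = -∑' n : ℤ, wWeight ℓ n * ((ℓ:ℂ) + n + 1) * (starRingEnd ℂ) (u n) * x (n+1) := by
        rw [hG, tsum_neg]

/-- the generators `A₁`, `A₂` are skew-symmetric with respect to the inner
product `⟨f|v⟩₊ = Σ_{n ≥ ℓ+1} w(n)·conj(f(n))·v(n)` on finitely supported sequences
vanishing for `n ≤ ℓ` (unitarity of the holomorphic subrepresentation `T_ℓ⁺`). -/
theorem stmt9 (ℓ : ℕ) (f v : ℤ → ℂ)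
    (hf : (Function.support f).Finite) (hv : (Function.support v).Finite)
    (hf0 : ∀ n : ℤ, n ≤ (ℓ : ℤ) → f n = 0) (hv0 : ∀ n : ℤ, n ≤ (ℓ : ℤ) → v n = 0) :
    (∑' n : {n : ℤ // (ℓ : ℤ) + 1 ≤ n},
        wWeight ℓ n * (starRingEnd ℂ) (A1disc ℓ f n) * v n =
      -∑' n : {n : ℤ // (ℓ : ℤ) + 1 ≤ n},
        wWeight ℓ n * (starRingEnd ℂ) (f n) * A1disc ℓ v n) ∧
    (∑' n : {n : ℤ // (ℓ : ℤ) + 1 ≤ n},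
        wWeight ℓ n * (starRingEnd ℂ) (A2disc ℓ f n) * v n =
      -∑' n : {n : ℤ // (ℓ : ℤ) + 1 ≤ n},
        wWeight ℓ n * (starRingEnd ℂ) (f n) * A2disc ℓ v n) := by
  classical
  have red : ∀ (F : ℤ → ℂ), (∀ n : ℤ, n ≤ (ℓ:ℤ) → F n = 0) →
      ∑' n : {n : ℤ // (ℓ : ℤ) + 1 ≤ n}, F n = ∑' n : ℤ, F n := by
    intro F hF
    exact tsum_subtype_eq_of_support_subset (s := {n : ℤ | (ℓ:ℤ) + 1 ≤ n})
      (fun n hn => by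
        by_contra h
        exact hn (hF n (by simpa using Int.lt_add_one_iff.mp (lt_of_not_ge (by simpa using h)))))
  set FA : ℤ → ℂ := fun n => wWeight ℓ n * ((ℓ:ℂ) + n + 1) * (starRingEnd ℂ) (f (n+1)) * v n
    with hFA
  set FB : ℤ → ℂ := fun n => wWeight ℓ n * ((ℓ:ℂ) - n + 1) * (starRingEnd ℂ) (f (n-1)) * v n
    with hFB
  set GA : ℤ → ℂ := fun n => wWeight ℓ n * ((ℓ:ℂ) + n + 1) * (starRingEnd ℂ) (f n) * v (n+1)
    with hGA
  set GB : ℤ → ℂ := fun n => wWeight ℓ n * ((ℓ:ℂ) - n + 1) * (starRingEnd ℂ) (f n) * v (n-1)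
    with hGB
  have sFA : Summable FA := summable_of_finite_support <| hv.subset fun n hn => by
    simp only [hFA, mem_support] at hn ⊢
    intro h; exact hn (by simp [h])
  have sFB : Summable FB := summable_of_finite_support <| hv.subset fun n hn => by
    simp only [hFB, mem_support] at hn ⊢
    intro h; exact hn (by simp [h])
  have sGA : Summable GA := summable_of_finite_support <| hf.subset fun n hn => by
    simp only [hGA, mem_support] at hn ⊢
    intro h; exact hn (by simp [h])
  have sGB : Summable GB := summable_of_finite_support <| hf.subset fun n hn => by
    simp only [hGB, mem_support] at hn ⊢
    intro h; exact hn (by simp [h])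
  have hAe : ∑' n : ℤ, FA n = -∑' n : ℤ, GB n := sumA ℓ f v hv0
  have hBe : ∑' n : ℤ, FB n = -∑' n : ℤ, GA n := sumB ℓ f v hf0
  have r1 : (∑' n : {n : ℤ // (ℓ : ℤ) + 1 ≤ n},
      wWeight ℓ n * (starRingEnd ℂ) (A1disc ℓ f n) * v n)
      = ∑' n : ℤ, wWeight ℓ n * (starRingEnd ℂ) (A1disc ℓ f n) * v n :=
    red (fun m => wWeight ℓ m * (starRingEnd ℂ) (A1disc ℓ f m) * v m)
      (fun n hn => by simp [hv0 n hn])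
  have r2 : (∑' n : {n : ℤ // (ℓ : ℤ) + 1 ≤ n},
      wWeight ℓ n * (starRingEnd ℂ) (f n) * A1disc ℓ v n)
      = ∑' n : ℤ, wWeight ℓ n * (starRingEnd ℂ) (f n) * A1disc ℓ v n :=
    red (fun m => wWeight ℓ m * (starRingEnd ℂ) (f m) * A1disc ℓ v m)
      (fun n hn => by simp [hf0 n hn])
  have r3 : (∑' n : {n : ℤ // (ℓ : ℤ) + 1 ≤ n},
      wWeight ℓ n * (starRingEnd ℂ) (A2disc ℓ f n) * v n)
      = ∑' n : ℤ, wWeight ℓ n * (starRingEnd ℂ) (A2disc ℓ f n) * v n :=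
    red (fun m => wWeight ℓ m * (starRingEnd ℂ) (A2disc ℓ f m) * v m)
      (fun n hn => by simp [hv0 n hn])
  have r4 : (∑' n : {n : ℤ // (ℓ : ℤ) + 1 ≤ n},
      wWeight ℓ n * (starRingEnd ℂ) (f n) * A2disc ℓ v n)
      = ∑' n : ℤ, wWeight ℓ n * (starRingEnd ℂ) (f n) * A2disc ℓ v n :=
    red (fun m => wWeight ℓ m * (starRingEnd ℂ) (f m) * A2disc ℓ v m)
      (fun n hn => by simp [hf0 n hn])
  constructor
  · rw [r1, r2]
    have e1 : ∀ n : ℤ, wWeight ℓ n * (starRingEnd ℂ) (A1disc ℓ f n) * v n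
        = (1/2 : ℂ) * FA n + (1/2 : ℂ) * FB n := by
      intro n
      simp only [hFA, hFB, A1disc, map_add, map_mul, map_sub, map_one, map_div₀,
        map_ofNat, map_natCast, map_intCast]
      ring
    have e2 : ∀ n : ℤ, wWeight ℓ n * (starRingEnd ℂ) (f n) * A1disc ℓ v n
        = (1/2 : ℂ) * GA n + (1/2 : ℂ) * GB n := by
      intro n
      simp only [hGA, hGB, A1disc]
      ring
    rw [tsum_congr e1, tsum_congr e2,
      Summable.tsum_add (sFA.mul_left _) (sFB.mul_left _), Summable.tsum_add (sGA.mul_left _) (sGB.mul_left _),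
      tsum_mul_left, tsum_mul_left, tsum_mul_left, tsum_mul_left, hAe, hBe]
    ring
  · rw [r3, r4]
    have e1 : ∀ n : ℤ, wWeight ℓ n * (starRingEnd ℂ) (A2disc ℓ f n) * v n
        = (-(Complex.I/2)) * FA n + (Complex.I/2) * FB n := by
      intro n
      simp only [hFA, hFB, A2disc, map_add, map_mul, map_sub, map_one, map_div₀,
        map_ofNat, map_natCast, map_intCast, Complex.conj_I]
      ring
    have e2 : ∀ n : ℤ, wWeight ℓ n * (starRingEnd ℂ) (f n) * A2disc ℓ v n
        = (Complex.I/2) * GA n + (-(Complex.I/2)) * GB n := by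
      intro n
      simp only [hGA, hGB, A2disc]
      ring
    rw [tsum_congr e1, tsum_congr e2,
      Summable.tsum_add (sFA.mul_left _) (sFB.mul_left _), Summable.tsum_add (sGA.mul_left _) (sGB.mul_left _),
      tsum_mul_left, tsum_mul_left, tsum_mul_left, tsum_mul_left, hAe, hBe]
    ring

end
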